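/- Let points p_1 < p_2 < ... < p_m be the start- and endpoints of a finite family of closed intervals I ∪ I' where I'_j ⊇ I_j for each j. For each i let α_i be the number of intervals of I containing p_i and β_i = |{j : p_i ∉ I_j, p_i ∈ I'_j}|. Then max over X ⊆ [n] with |X| ≤ k of ω(G(I_X)) equals max_i (α_i + min(β_i, k)), where I_X replaces I_j by I'_j for j ∈ X and ω is the maximum clique size. -/

import Mathlib

def intervalGraph {n : ℕ} (J : Fin n → ℝ × ℝ) : SimpleGraph (Fin n) where
  Adj u v := u ≠ v ∧ (Set.Icc (J u).1 (J u).2 ∩ Set.Icc (J v).1 (J v).2).Nonempty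
  symm := by
    constructor
    rintro u v ⟨h, x, hx⟩
    exact ⟨h.symm, x, hx.2, hx.1⟩
  loopless := by constructor; rintro v ⟨h, _⟩; exact h rfl

/-- The clique number: the maximum size of a clique. -/
noncomputable def cliqueN {W : Type*} (G : SimpleGraph W) : ℕ :=
  sSup {m : ℕ | ∃ s : Finset W, G.IsClique ↑s ∧ s.card = m}

/-!
A clique of intervals has a common point, namely the largest left endpoint among its
members (Helly's property on the line), so every clique of `G(I_X)` lies among the intervals
of `I_X` through some left endpoint `p`. Those are the `α = coverCount p` intervals of `I`
through `p` together with at most `min(β, |X|)` expanded ones, where `β = gainCount p`.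
Conversely, at a point `p` expanding `min(β, k)` of the intervals that reach `p` only after
expansion makes all intervals through `p` a clique.
-/

section CliqueNumber

variable {W : Type*} (G : SimpleGraph W)

lemma cliqueN_le {m : ℕ} (h : ∀ s : Finset W, G.IsClique ↑s → s.card ≤ m) : cliqueN G ≤ m :=
  csSup_le' (by rintro _ ⟨s, hs, rfl⟩; exact h s hs)

variable [Fintype W]

lemma cliqueN_le_card : cliqueN G ≤ Fintype.card W :=
  cliqueN_le G fun s _ => s.card_le_univ

lemma le_cliqueN {s : Finset W} (hs : G.IsClique ↑s) : s.card ≤ cliqueN G :=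
  le_csSup ⟨Fintype.card W, by rintro _ ⟨t, -, rfl⟩; exact t.card_le_univ⟩ ⟨s, hs, rfl⟩

end CliqueNumber

section IntervalGraph

variable {n : ℕ} (J : Fin n → ℝ × ℝ)

lemma intervalGraph_isClique_of_mem {s : Finset (Fin n)} (x : ℝ)
    (hx : ∀ i ∈ s, x ∈ Set.Icc (J i).1 (J i).2) : (intervalGraph J).IsClique ↑s :=
  fun u hu v hv huv => ⟨huv, x, hx u hu, hx v hv⟩

lemma intervalGraph_exists_common_left_endpoint (hJ : ∀ j, (J j).1 ≤ (J j).2)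
    {s : Finset (Fin n)} (hs : (intervalGraph J).IsClique ↑s) (hne : s.Nonempty) :
    ∃ j ∈ s, ∀ i ∈ s, (J j).1 ∈ Set.Icc (J i).1 (J i).2 := by
  obtain ⟨j, hj, hmax⟩ := s.exists_max_image (fun i => (J i).1) hne
  refine ⟨j, hj, fun i hi => ⟨hmax i hi, ?_⟩⟩
  rcases eq_or_ne i j with rfl | hij
  · exact hJ i
  · obtain ⟨-, y, hyi, hyj⟩ := hs hi hj hij
    exact hyj.1.trans hyi.2

end IntervalGraph

section Expansion

variable {n : ℕ} (a b a' b' : Fin n → ℝ)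

def expandOn (X : Finset (Fin n)) (j : Fin n) : ℝ × ℝ :=
  if j ∈ X then (a' j, b' j) else (a j, b j)

noncomputable def coverCount (x : ℝ) : ℕ :=
  (Finset.univ.filter fun j : Fin n => a j ≤ x ∧ x ≤ b j).card

noncomputable def gainCount (x : ℝ) : ℕ :=
  (Finset.univ.filter fun j : Fin n => ¬ (a j ≤ x ∧ x ≤ b j) ∧ a' j ≤ x ∧ x ≤ b' j).card

lemma expandOn_fst_mem (X : Finset (Fin n)) (j : Fin n) :
    (expandOn a b a' b' X j).1 ∈ Finset.univ.image a ∪ Finset.univ.image b ∪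
      Finset.univ.image a' ∪ Finset.univ.image b' := by
  unfold expandOn
  split_ifs <;> simp

lemma card_filter_mem_expandOn_le {k : ℕ} {X : Finset (Fin n)} (hX : X.card ≤ k) (x : ℝ) :
    (Finset.univ.filter fun j => x ∈ Set.Icc (expandOn a b a' b' X j).1
      (expandOn a b a' b' X j).2).card ≤ coverCount a b x + min (gainCount a b a' b' x) k := by
  set A := Finset.univ.filter fun j : Fin n => a j ≤ x ∧ x ≤ b j
  set B := Finset.univ.filter fun j : Fin n => ¬ (a j ≤ x ∧ x ≤ b j) ∧ a' j ≤ x ∧ x ≤ b' j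
  have hsub : (Finset.univ.filter fun j => x ∈ Set.Icc (expandOn a b a' b' X j).1
      (expandOn a b a' b' X j).2) ⊆ A ∪ X ∩ B := by
    intro j hj
    by_cases hjX : j ∈ X <;> by_cases hjA : a j ≤ x ∧ x ≤ b j <;>
      simp_all [A, B, expandOn]
  calc _ ≤ (A ∪ X ∩ B).card := Finset.card_le_card hsub
    _ ≤ A.card + (X ∩ B).card := Finset.card_union_le _ _
    _ ≤ A.card + min B.card k := by
      gcongr
      exact le_min (Finset.card_le_card Finset.inter_subset_right)
        ((Finset.card_le_card Finset.inter_subset_left).trans hX)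

lemma cliqueN_expandOn_le (hab : ∀ j, a j ≤ b j) (hexp : ∀ j, a' j ≤ a j ∧ b j ≤ b' j)
    {k : ℕ} {X : Finset (Fin n)} (hX : X.card ≤ k) :
    cliqueN (intervalGraph (expandOn a b a' b' X)) ≤
      (Finset.univ.image a ∪ Finset.univ.image b ∪ Finset.univ.image a' ∪
        Finset.univ.image b').sup fun x => coverCount a b x + min (gainCount a b a' b' x) k := by
  have hJ : ∀ j, (expandOn a b a' b' X j).1 ≤ (expandOn a b a' b' X j).2 := by
    intro j
    unfold expandOn
    split_ifs
    · exact (hexp j).1.trans ((hab j).trans (hexp j).2)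
    · exact hab j
  refine cliqueN_le _ fun s hs => ?_
  rcases s.eq_empty_or_nonempty with rfl | hne
  · simp
  obtain ⟨j, -, hcommon⟩ := intervalGraph_exists_common_left_endpoint _ hJ hs hne
  calc s.card ≤ _ := Finset.card_le_card fun i hi => Finset.mem_filter.mpr
        ⟨Finset.mem_univ i, hcommon i hi⟩
    _ ≤ _ := card_filter_mem_expandOn_le a b a' b' hX _
    _ ≤ _ := Finset.le_sup (f := fun x => coverCount a b x + min (gainCount a b a' b' x) k)
        (expandOn_fst_mem a b a' b' X j)

lemma exists_le_cliqueN_expandOn (k : ℕ) (x : ℝ) :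
    ∃ X : Finset (Fin n), X.card ≤ k ∧
      coverCount a b x + min (gainCount a b a' b' x) k ≤
        cliqueN (intervalGraph (expandOn a b a' b' X)) := by
  set A := Finset.univ.filter fun j : Fin n => a j ≤ x ∧ x ≤ b j
  set B := Finset.univ.filter fun j : Fin n => ¬ (a j ≤ x ∧ x ≤ b j) ∧ a' j ≤ x ∧ x ≤ b' j
  obtain ⟨X, hXB, hXcard⟩ := Finset.exists_subset_card_eq (min_le_left B.card k)
  have hdisj : Disjoint A X := Finset.disjoint_left.mpr fun j hjA hjX =>
    (Finset.mem_filter.mp (hXB hjX)).2.1 (Finset.mem_filter.mp hjA).2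
  have hclique : (intervalGraph (expandOn a b a' b' X)).IsClique ↑(A ∪ X) := by
    refine intervalGraph_isClique_of_mem _ x fun j hj => ?_
    by_cases hjX : j ∈ X
    · have := hXB hjX
      simp_all [B, expandOn]
    · simp_all [A, expandOn]
  refine ⟨X, hXcard ▸ min_le_right _ _, ?_⟩
  calc coverCount a b x + min (gainCount a b a' b' x) k = (A ∪ X).card := by
        rw [Finset.card_union_of_disjoint hdisj, hXcard]; rfl
    _ ≤ _ := le_cliqueN _ hclique

end Expansion

/-- Clique number assistance formula: the maximum over `|X| ≤ k` of
`ω(G(I_X))` equals `max_i (α_i + min(β_i, k))`, where the max is over all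
start- and endpoints `p_i` of intervals in `I ∪ I'`, `α_i` counts original
intervals containing `p_i`, and `β_i` counts intervals whose expansion, but
not original, contains `p_i`. -/
theorem stmt17 {n : ℕ} (a b a' b' : Fin n → ℝ) (k : ℕ)
    (hab : ∀ j, a j ≤ b j)
    (hexp : ∀ j, a' j ≤ a j ∧ b j ≤ b' j) :
    sSup {m : ℕ | ∃ X : Finset (Fin n), X.card ≤ k ∧
        m = cliqueN (intervalGraph fun j =>
          if j ∈ X then (a' j, b' j) else (a j, b j))}
      = ((Finset.univ.image a) ∪ (Finset.univ.image b) ∪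
          (Finset.univ.image a') ∪ (Finset.univ.image b')).sup fun x =>
          (Finset.univ.filter fun j : Fin n => a j ≤ x ∧ x ≤ b j).card +
            min ((Finset.univ.filter fun j : Fin n =>
              ¬ (a j ≤ x ∧ x ≤ b j) ∧ a' j ≤ x ∧ x ≤ b' j).card) k := by
  change sSup {m : ℕ | ∃ X : Finset (Fin n), X.card ≤ k ∧
      m = cliqueN (intervalGraph (expandOn a b a' b' X))} = _
  have hbdd : BddAbove {m : ℕ | ∃ X : Finset (Fin n), X.card ≤ k ∧
      m = cliqueN (intervalGraph (expandOn a b a' b' X))} :=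
    ⟨Fintype.card (Fin n), by rintro _ ⟨X, -, rfl⟩; exact cliqueN_le_card _⟩
  apply le_antisymm
  · refine csSup_le' ?_
    rintro _ ⟨X, hX, rfl⟩
    exact cliqueN_expandOn_le a b a' b' hab hexp hX
  · refine Finset.sup_le fun x _ => ?_
    obtain ⟨X, hX, hle⟩ := exists_le_cliqueN_expandOn a b a' b' k x
    exact hle.trans (le_csSup hbdd ⟨X, hX, rfl⟩)
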